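/- Let M ≥ 1 and x : ZMod (2M) → ℝ with ‖Poly(x)_0‖ ≠ ‖Poly(x)_1‖ in the ℓ2-norm. Then adaptive polyphase sampling is shift-equivariant on x: if ‖Poly(x)_0‖ > ‖Poly(x)_1‖ then APS(T_{2M} x) = T_M (APS(x)), and if ‖Poly(x)_0‖ < ‖Poly(x)_1‖ then APS(T_{2M} x) = APS(x). In particular APS(T_{2M} x) ∈ {APS(x), T_M APS(x)}. -/
import Mathlib


/-- Circular shift of a signal of length `N`: `(T_N x)[n] = x[n+1]`. -/
def Tshift (N : ℕ) (x : ZMod N → ℝ) : ZMod N → ℝ := fun n => x (n + 1)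

/-- Polyphase component `k ∈ {0,1}` of a signal of length `2M`:
`Poly(x)_k[n] = x[(2 n̄ + k) mod 2M]`. -/
def poly (M : ℕ) (x : ZMod (2 * M) → ℝ) (k : Fin 2) : ZMod M → ℝ :=
  fun n => x ((2 * n.val + k.val : ℕ) : ZMod (2 * M))

/-- ℓ2-norm of a signal of length `M`. -/
noncomputable def l2norm (M : ℕ) [NeZero M] (y : ZMod M → ℝ) : ℝ :=
  Real.sqrt (∑ n : ZMod M, (y n) ^ 2)

/-- Adaptive polyphase sampling: `APS(x) = Poly(x)_0` if `‖Poly(x)_0‖ > ‖Poly(x)_1‖`,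
else `Poly(x)_1`. -/
noncomputable def APS (M : ℕ) [NeZero M] (x : ZMod (2 * M) → ℝ) : ZMod M → ℝ :=
  if l2norm M (poly M x 1) < l2norm M (poly M x 0) then poly M x 0 else poly M x 1


lemma poly_shift0 (M : ℕ) (x : ZMod (2 * M) → ℝ) :
    poly M (Tshift (2 * M) x) 0 = poly M x 1 := by
  funext n
  simp only [poly, Tshift]
  congr 1
  simp only [Fin.val_zero, Fin.val_one, add_zero]
  push_cast
  ring

lemma poly_shift1 (M : ℕ) [NeZero M] (x : ZMod (2 * M) → ℝ) :
    poly M (Tshift (2 * M) x) 1 = Tshift M (poly M x 0) := by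
  funext n
  simp only [poly, Tshift]
  congr 1
  have h : (n + 1).val ≡ n.val + 1 [MOD M] := by
    rw [← ZMod.natCast_eq_natCast_iff]
    push_cast
    simp [ZMod.natCast_val, ZMod.cast_id]
  have h2 : (2 : ℕ) * ((n + 1).val) ≡ 2 * (n.val + 1) [MOD 2 * M] :=
    h.mul_left' (c := 2)
  have h3 : ((2 * (n + 1).val : ℕ) : ZMod (2 * M)) = ((2 * n.val + 2 : ℕ) : ZMod (2 * M)) := by
    rw [ZMod.natCast_eq_natCast_iff]
    calc (2 : ℕ) * ((n + 1).val) ≡ 2 * (n.val + 1) [MOD 2 * M] := h2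
      _ = 2 * n.val + 2 := by ring
  simp only [Fin.val_zero, Fin.val_one, add_zero]
  rw [h3]
  push_cast
  ring

lemma l2norm_shift (M : ℕ) [NeZero M] (y : ZMod M → ℝ) :
    l2norm M (Tshift M y) = l2norm M y := by
  unfold l2norm Tshift
  congr 1
  exact Fintype.sum_equiv (Equiv.addRight 1) _ _ (fun n => rfl)

/-- APS is shift-equivariant on signals with distinct polyphase norms. -/
theorem aps_shift_equivariant (M : ℕ) [NeZero M] (x : ZMod (2 * M) → ℝ)
    (hx : l2norm M (poly M x 0) ≠ l2norm M (poly M x 1)) :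
    (l2norm M (poly M x 1) < l2norm M (poly M x 0) →
      APS M (Tshift (2 * M) x) = Tshift M (APS M x)) ∧
    (l2norm M (poly M x 0) < l2norm M (poly M x 1) →
      APS M (Tshift (2 * M) x) = APS M x) ∧
    APS M (Tshift (2 * M) x) ∈ ({APS M x, Tshift M (APS M x)} : Set (ZMod M → ℝ)) := by
  have e0 := poly_shift0 M x
  have e1 := poly_shift1 M x
  have hn : l2norm M (poly M (Tshift (2 * M) x) 1) = l2norm M (poly M x 0) := by
    rw [e1, l2norm_shift]
  have hn0 : l2norm M (poly M (Tshift (2 * M) x) 0) = l2norm M (poly M x 1) := by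
    rw [e0]
  constructor
  · intro h
    unfold APS
    rw [hn, hn0, e0, e1]
    rw [if_neg (not_lt.2 h.le), if_pos h]
  constructor
  · intro h
    unfold APS
    rw [hn, hn0, e0, e1]
    rw [if_pos h, if_neg (not_lt.2 h.le)]
  · rcases lt_or_gt_of_ne hx with h | h
    · left
      unfold APS
      rw [hn, hn0, e0, e1, if_pos h, if_neg (not_lt.2 h.le)]
    · right
      unfold APS
      rw [hn, hn0, e0, e1, if_neg (not_lt.2 h.le), if_pos h]
      rfl
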